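/- arXiv:2201.11922 — 4 statements merged into one kernel-verified Lean document; each statement's English description precedes it below -/
import Mathlib

section
/- Let K be a real number with K² ≠ 3 and K ≠ −3 and K ≠ −5/3. Set ν = −(K³ + 3K² + 9K + 11)/((K + 3)(K² − 3)) and U = (3 − K²)/(6K + 10). Then 4(1+ν)² U³ − 3(1+ν)(ν+3) U² + 6(1+ν) U − 2 = 0. -/
/-!
The substitution `W = (1 + ν) U` turns the cubic into `W² (4U - 3) - 6W (U - 1) - 2`, and along
the parametrization the product collapses to `W = 2 / (K + 3)` because `1 + ν = -2 (6K + 10) / ((K + 3)(K² - 3))`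
cancels the denominator of `U`. What remains is linear in `U` and vanishes since `(6K + 10) U = 3 - K²`.
-/

noncomputable def nuParam (K : ℝ) : ℝ :=
  -(K ^ 3 + 3 * K ^ 2 + 9 * K + 11) / ((K + 3) * (K ^ 2 - 3))

noncomputable def uParam (K : ℝ) : ℝ :=
  (3 - K ^ 2) / (6 * K + 10)

theorem cubic_eq_of_mul (ν U : ℝ) :
    4 * (1 + ν) ^ 2 * U ^ 3 - 3 * (1 + ν) * (ν + 3) * U ^ 2 + 6 * (1 + ν) * U - 2 =
      ((1 + ν) * U) ^ 2 * (4 * U - 3) - 6 * ((1 + ν) * U) * (U - 1) - 2 := by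
  ring

theorem one_add_nuParam {K : ℝ} (hK3 : K + 3 ≠ 0) (hK : K ^ 2 - 3 ≠ 0) :
    1 + nuParam K = -2 * (6 * K + 10) / ((K + 3) * (K ^ 2 - 3)) := by
  unfold nuParam
  field_simp
  ring

theorem one_add_nuParam_mul_uParam {K : ℝ} (hK3 : K + 3 ≠ 0) (hK : K ^ 2 - 3 ≠ 0)
    (hK5 : 6 * K + 10 ≠ 0) : (1 + nuParam K) * uParam K = 2 / (K + 3) := by
  rw [one_add_nuParam hK3 hK, uParam]
  field_simp
  ring

/-- With ν = −(K³+3K²+9K+11)/((K+3)(K²−3)) and U = (3−K²)/(6K+10), one has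
4(1+ν)²U³ − 3(1+ν)(ν+3)U² + 6(1+ν)U − 2 = 0. -/
theorem stmt_2 (K : ℝ) (h1 : K ^ 2 ≠ 3) (h2 : K ≠ -3) (h3 : K ≠ -5 / 3) :
    let ν : ℝ := -(K ^ 3 + 3 * K ^ 2 + 9 * K + 11) / ((K + 3) * (K ^ 2 - 3))
    let U : ℝ := (3 - K ^ 2) / (6 * K + 10)
    4 * (1 + ν) ^ 2 * U ^ 3 - 3 * (1 + ν) * (ν + 3) * U ^ 2 + 6 * (1 + ν) * U - 2 = 0 := by
  intro ν U
  have hK3 : K + 3 ≠ 0 := fun h => h2 (by linarith)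
  have hK5 : 6 * K + 10 ≠ 0 := fun h => h3 (by linarith)
  have hW : (1 + ν) * U = 2 / (K + 3) :=
    one_add_nuParam_mul_uParam hK3 (sub_ne_zero.mpr h1) hK5
  have hU : (6 * K + 10) * U = 3 - K ^ 2 := mul_div_cancel₀ _ hK5
  rw [cubic_eq_of_mul, hW]
  field_simp
  linear_combination (-2) * hU
end

section
/- Let x, y be real numbers with 0 ≤ y < 1 and 0 ≤ x < (1−y)²/4. Then the double series ∑_{k,k'≥0} ((2k+k')!/(k! k! k'!)) x^k y^{k'} converges and equals ((1−y)² − 4x)^{−1/2}. -/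
/-!
Summing over `k'` first, the negative binomial series
`∑ₘ C(m + 2k, 2k) yᵐ = (1 - y)^(-(2k+1))` turns the double series into
`(1 - y)⁻¹ ∑ₖ C(2k, k) tᵏ` with `t = x / (1 - y)²`, since the trinomial coefficient factors as
`C(2k, k) C(2k + k', 2k)`. The central binomial series `∑ₖ C(2k, k) tᵏ = (1 - 4t)^(-1/2)` is the
binomial series of `(1 - u)^(-1/2)` at `u = 4t`, because `C(n - 1/2, n) = C(2n, n) / 4ⁿ`.
All terms being nonnegative, the iterated sum is the sum over `ℕ × ℕ`.
-/

open Nat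

lemma ascPochhammer_eval_one_half {K : Type*} [Field K] [CharZero K] (n : ℕ) :
    (ascPochhammer K n).eval (1 / 2) = n ! * centralBinom n / 4 ^ n := by
  induction n with
  | zero => simp
  | succ n ih =>
    have h : ((n : K) + 1) * centralBinom (n + 1) = 2 * (2 * n + 1) * centralBinom n := by
      exact_mod_cast succ_mul_centralBinom_succ n
    rw [ascPochhammer_succ_eval, ih, factorial_succ]
    push_cast
    linear_combination -(n ! : K) / 4 ^ (n + 1) * h

lemma Ring.choose_one_half_add_sub_one {K : Type*} [Field K] [CharZero K] (n : ℕ) :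
    Ring.choose ((1 / 2 : K) + n - 1) n = centralBinom n / 4 ^ n := by
  rw [← Ring.multichoose_eq, ← mul_right_inj' (Nat.cast_ne_zero.2 n.factorial_ne_zero),
    ← nsmul_eq_mul, Ring.factorial_nsmul_multichoose_eq_ascPochhammer,
    Polynomial.ascPochhammer_smeval_eq_eval, ascPochhammer_eval_one_half]
  ring

theorem hasSum_centralBinom_mul_pow {t : ℝ} (ht : |t| < 1 / 4) :
    HasSum (fun n ↦ centralBinom n * t ^ n) ((1 - 4 * t) ^ (-(1 : ℝ) / 2)) := by
  have h4t : 4 * t ∈ Metric.eball (0 : ℝ) 1 := by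
    rw [Metric.mem_eball, edist_zero_right, ← ofReal_norm, ENNReal.ofReal_lt_one, norm_mul]
    norm_num
    linarith
  have h := (Real.one_div_one_sub_rpow_hasFPowerSeriesOnBall_zero (1 / 2)).hasSum h4t
  rw [FormalMultilinearSeries.ofScalars_apply_eq', zero_add, one_div ((1 - 4 * t) ^ _),
    ← Real.rpow_neg (by linarith [abs_lt.1 ht]), ← neg_div] at h
  refine h.congr_fun fun n ↦ ?_
  rw [Ring.choose_one_half_add_sub_one, smul_eq_mul, mul_pow]
  field_simp

theorem hasSum_centralBinom_mul_pow_div_pow {a x : ℝ} (ha : 0 < a) (hx : |x| < a ^ 2 / 4) :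
    HasSum (fun n ↦ centralBinom n * x ^ n / a ^ (2 * n + 1))
      ((a ^ 2 - 4 * x) ^ (-(1 : ℝ) / 2)) := by
  have ht : |x / a ^ 2| < 1 / 4 := by
    rw [abs_div, abs_of_pos (pow_pos ha 2), div_lt_iff₀ (by positivity)]
    linarith
  have hD : 0 ≤ a ^ 2 - 4 * x := by linarith [le_abs_self x]
  have h := (hasSum_centralBinom_mul_pow ht).mul_left a⁻¹
  have hval :
      a⁻¹ * (1 - 4 * (x / a ^ 2)) ^ (-(1 : ℝ) / 2) = (a ^ 2 - 4 * x) ^ (-(1 : ℝ) / 2) := by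
    rw [show 1 - 4 * (x / a ^ 2) = (a ^ 2 - 4 * x) / a ^ 2 by field_simp,
      Real.div_rpow hD (by positivity), ← Real.rpow_natCast_mul ha.le]
    norm_num [Real.rpow_neg_one]
    field_simp
  rw [hval] at h
  refine h.congr_fun fun n ↦ ?_
  rw [pow_succ, pow_mul, div_pow]
  field_simp

lemma cast_factorial_div_eq_centralBinom_mul_choose (k m : ℕ) :
    ((2 * k + m)! : ℝ) / (k ! * k ! * m !) = centralBinom k * (m + 2 * k).choose (2 * k) := by
  have hc : centralBinom k * k ! * k ! = (2 * k)! := by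
    rw [centralBinom_eq_two_mul_choose, two_mul, add_choose_mul_factorial_mul_factorial]
  have hm := add_choose_mul_factorial_mul_factorial m (2 * k)
  rw [div_eq_iff (by positivity), add_comm (2 * k) m, ← hm, ← hc]
  push_cast
  ring

theorem hasSum_prod_of_nonneg {β γ : Type*} {f : β × γ → ℝ} {g : β → ℝ} {a : ℝ} (hf : 0 ≤ f)
    (hfg : ∀ b, HasSum (fun c ↦ f (b, c)) (g b)) (hg : HasSum g a) : HasSum f a := by
  have hs : Summable f := (summable_prod_of_nonneg hf).2
    ⟨fun b ↦ (hfg b).summable, hg.summable.congr fun b ↦ ((hfg b).tsum_eq).symm⟩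
  exact (hs.hasSum.prod_fiberwise hfg).unique hg ▸ hs.hasSum

/-- For 0 ≤ y < 1 and 0 ≤ x < (1−y)²/4, the double series of trinomial
coefficients ∑_{k,k'} (2k+k')!/(k!k!k'!) xᵏ y^{k'} converges and equals
((1−y)² − 4x)^{−1/2}. -/
theorem stmt_12 (x y : ℝ) (hx : 0 ≤ x) (hy0 : 0 ≤ y) (hy1 : y < 1)
    (hxy : x < (1 - y) ^ 2 / 4) :
    Summable (fun p : ℕ × ℕ =>
      ((2 * p.1 + p.2).factorial : ℝ) /
        ((p.1.factorial : ℝ) * p.1.factorial * p.2.factorial) * x ^ p.1 * y ^ p.2) ∧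
    ∑' p : ℕ × ℕ,
      ((2 * p.1 + p.2).factorial : ℝ) /
        ((p.1.factorial : ℝ) * p.1.factorial * p.2.factorial) * x ^ p.1 * y ^ p.2
      = ((1 - y) ^ 2 - 4 * x) ^ (-(1 : ℝ) / 2) := by
  have hy : ‖y‖ < 1 := by rwa [Real.norm_of_nonneg hy0]
  have hfiber (k : ℕ) : HasSum (fun m ↦ ((2 * k + m)! : ℝ) / (k ! * k ! * m !) * x ^ k * y ^ m)
      (centralBinom k * x ^ k / (1 - y) ^ (2 * k + 1)) := by
    have h := (hasSum_choose_mul_geometric_of_norm_lt_one (2 * k) hy).mul_left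
      (centralBinom k * x ^ k)
    rw [← div_eq_mul_one_div] at h
    refine h.congr_fun fun m ↦ ?_
    rw [cast_factorial_div_eq_centralBinom_mul_choose]
    ring
  suffices h : HasSum _ (((1 - y) ^ 2 - 4 * x) ^ (-(1 : ℝ) / 2)) from
    ⟨h.summable, h.tsum_eq⟩
  exact hasSum_prod_of_nonneg (fun p ↦ by positivity) hfiber
    (hasSum_centralBinom_mul_pow_div_pow (sub_pos.2 hy1) (by rwa [abs_of_nonneg hx]))
end

section
/- Let (s_n)_{n≥0} be a nonincreasing sequence of nonnegative real numbers, and suppose there exist constants C > 0 and α > 0 such that ∑_{k≥n} s_k ∼ C n^{−α} as n → ∞. Then s_n ∼ α C n^{−α−1} as n → ∞. -/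
/-!
Write `T n = ∑_{k ≥ n} s_k`. Since `s` is nonincreasing, for `m > n` the average of `s` over
`[n, m)`, namely `(T n - T m) / (m - n)`, is at most `s n`, and for `m < n` the average over
`[m, n)` is at least `s n`. Taking `m = ⌈c n⌉` with `c` close to `1`, the tail asymptotics
turn these averages into `α C n^{-α-1}` times the difference quotient `(1 - c^{-α}) / (α (c - 1))`
of `x ↦ x^{-α}` at `1`, up to `o(1)`. Letting `c → 1` from above and from below squeezes
`s n / (α C n^{-α-1})` to `1`.
-/

open Filter Topology Real Finset

theorem tendsto_of_eventually_bounds {ι κ γ β : Type*} [LinearOrder β] [TopologicalSpace β]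
    [OrderTopology β] {f : Filter γ} {l₁ : Filter ι} {l₂ : Filter κ} [l₁.NeBot] [l₂.NeBot]
    {r : γ → β} {lo : ι → β} {hi : κ → β} {a : β}
    (hlo : Tendsto lo l₁ (𝓝 a)) (hhi : Tendsto hi l₂ (𝓝 a))
    (h_lo : ∀ᶠ i in l₁, ∀ b < lo i, ∀ᶠ x in f, b < r x)
    (h_hi : ∀ᶠ j in l₂, ∀ b > hi j, ∀ᶠ x in f, r x < b) :
    Tendsto r f (𝓝 a) := by
  refine tendsto_order.2 ⟨fun b hb => ?_, fun b hb => ?_⟩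
  · obtain ⟨i, hbi, hi⟩ := ((hlo.eventually (lt_mem_nhds hb)).and h_lo).exists
    exact hi b hbi
  · obtain ⟨j, hbj, hj⟩ := ((hhi.eventually (gt_mem_nhds hb)).and h_hi).exists
    exact hj b hbj

theorem tendsto_one_sub_rpow_neg_div {α : ℝ} (hα : α ≠ 0) :
    Tendsto (fun c : ℝ => (1 - c ^ (-α)) / (α * (c - 1))) (𝓝[≠] 1) (𝓝 1) := by
  have hderiv : HasDerivAt (fun x : ℝ => x ^ (-α)) (-α) 1 := by
    simpa using Real.hasDerivAt_rpow_const (p := -α) (Or.inl one_ne_zero)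
  have hslope := (hasDerivAt_iff_tendsto_slope.mp hderiv).div_const (-α)
  rw [div_self (neg_ne_zero.mpr hα)] at hslope
  refine hslope.congr fun c => ?_
  rw [slope_def_field, one_rpow]
  field_simp
  ring

noncomputable def tailSum (s : ℕ → ℝ) (n : ℕ) : ℝ := ∑' k, s (n + k)

noncomputable def tailAverage (s : ℕ → ℝ) (n m : ℕ) : ℝ :=
  (tailSum s n - tailSum s m) / ((m : ℝ) - n)

theorem tailSum_sub_tailSum_add {s : ℕ → ℝ} (hs : Summable s) (n k : ℕ) :
    tailSum s n - tailSum s (n + k) = ∑ j ∈ range k, s (n + j) := by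
  have hsn : Summable fun j => s (n + j) := by
    simpa only [add_comm n] using (summable_nat_add_iff n).mpr hs
  rw [tailSum, tailSum, ← hsn.sum_add_tsum_nat_add k, add_sub_assoc, sub_eq_zero_of_eq, add_zero]
  exact tsum_congr fun i => by rw [add_comm i k, add_assoc]

theorem tailSum_sub_tailSum_add_le {s : ℕ → ℝ} (hs : Antitone s) (hsum : Summable s) (n k : ℕ) :
    tailSum s n - tailSum s (n + k) ≤ k * s n := by
  rw [tailSum_sub_tailSum_add hsum]
  simpa using Finset.sum_le_card_nsmul (range k) _ (s n)
    fun j _ => hs (Nat.le_add_right n j)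

theorem mul_le_tailSum_sub_tailSum_add {s : ℕ → ℝ} (hs : Antitone s) (hsum : Summable s)
    (n k : ℕ) : k * s (n + k) ≤ tailSum s n - tailSum s (n + k) := by
  rw [tailSum_sub_tailSum_add hsum]
  simpa using Finset.card_nsmul_le_sum (range k) _ (s (n + k))
    fun j hj => hs (by have := Finset.mem_range.mp hj; omega)

theorem tailAverage_le {s : ℕ → ℝ} (hs : Antitone s) (hsum : Summable s) {n m : ℕ}
    (h : n < m) : tailAverage s n m ≤ s n := by
  obtain ⟨k, rfl⟩ := Nat.exists_eq_add_of_le h.le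
  have hk : (0 : ℝ) < (n + k : ℕ) - n := by push_cast; simpa using h
  rw [tailAverage, div_le_iff₀ hk]
  have := tailSum_sub_tailSum_add_le hs hsum n k
  push_cast
  linarith

theorem le_tailAverage {s : ℕ → ℝ} (hs : Antitone s) (hsum : Summable s) {n m : ℕ}
    (h : m < n) : s n ≤ tailAverage s n m := by
  obtain ⟨k, rfl⟩ := Nat.exists_eq_add_of_le h.le
  have hk : (0 : ℝ) < (m + k : ℕ) - m := by push_cast; simpa using h
  rw [tailAverage, ← neg_div_neg_eq, neg_sub, neg_sub, le_div_iff₀ hk]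
  have := mul_le_tailSum_sub_tailSum_add hs hsum m k
  push_cast
  linarith

theorem tendsto_tailSum_comp_div {s : ℕ → ℝ} {C α c : ℝ} {m : ℕ → ℕ}
    (htail : Tendsto (fun n : ℕ => tailSum s n / (C * (n : ℝ) ^ (-α))) atTop (𝓝 1))
    (hm : Tendsto (fun N : ℕ => (m N : ℝ) / N) atTop (𝓝 c)) (hc : 0 < c) :
    Tendsto (fun N : ℕ => tailSum s (m N) / (C * (N : ℝ) ^ (-α))) atTop (𝓝 (c ^ (-α))) := by
  have hm_top : Tendsto m atTop atTop := by
    rw [← tendsto_natCast_atTop_iff (R := ℝ)]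
    refine (hm.pos_mul_atTop hc tendsto_natCast_atTop_atTop).congr' ?_
    filter_upwards [eventually_gt_atTop 0] with N hN
    field_simp
  have h := (htail.comp hm_top).mul (hm.rpow_const (p := -α) (Or.inl hc.ne'))
  rw [one_mul] at h
  refine h.congr' ?_
  filter_upwards [hm_top.eventually (eventually_gt_atTop 0), eventually_gt_atTop 0] with N hmN hN
  have hmN' : (0 : ℝ) < m N := by exact_mod_cast hmN
  have hN' : (0 : ℝ) < N := by exact_mod_cast hN
  rw [Function.comp_apply, div_rpow hmN'.le hN'.le]
  have hmα := (rpow_pos_of_pos hmN' (-α)).ne'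
  have hNα := (rpow_pos_of_pos hN' (-α)).ne'
  field_simp

theorem tendsto_tailAverage_div {s : ℕ → ℝ} {C α c : ℝ} {m : ℕ → ℕ}
    (htail : Tendsto (fun n : ℕ => tailSum s n / (C * (n : ℝ) ^ (-α))) atTop (𝓝 1))
    (hm : Tendsto (fun N : ℕ => (m N : ℝ) / N) atTop (𝓝 c)) (hc : 0 < c) (hc₁ : c ≠ 1)
    (hα : α ≠ 0) :
    Tendsto (fun N : ℕ => tailAverage s N (m N) / (α * C * (N : ℝ) ^ (-α - 1))) atTop
      (𝓝 ((1 - c ^ (-α)) / (α * (c - 1)))) := by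
  have h := (htail.sub (tendsto_tailSum_comp_div htail hm hc)).div
    ((hm.sub_const 1).const_mul α) (mul_ne_zero hα (sub_ne_zero.2 hc₁))
  refine h.congr' ?_
  filter_upwards [eventually_gt_atTop 0] with N hN
  have hN' : (N : ℝ) ≠ 0 := by exact_mod_cast hN.ne'
  rw [Pi.div_apply, rpow_sub_one hN', div_sub_one hN', tailAverage]
  simp only [div_eq_mul_inv, mul_inv, inv_inv]
  ring

theorem eventually_lt_div_of_one_lt {s : ℕ → ℝ} {C α c : ℝ} (hs : Antitone s)
    (hsum : Summable s) (hC : 0 ≤ C) (hα : 0 < α)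
    (htail : Tendsto (fun n : ℕ => tailSum s n / (C * (n : ℝ) ^ (-α))) atTop (𝓝 1))
    (hc : 1 < c) :
    ∀ b < (1 - c ^ (-α)) / (α * (c - 1)),
      ∀ᶠ N : ℕ in atTop, b < s N / (α * C * (N : ℝ) ^ (-α - 1)) := by
  intro b hb
  have hm : Tendsto (fun N : ℕ => (⌈c * N⌉₊ : ℝ) / N) atTop (𝓝 c) :=
    (tendsto_nat_ceil_mul_div_atTop (by linarith)).comp tendsto_natCast_atTop_atTop
  filter_upwards [(tendsto_tailAverage_div htail hm (by linarith) hc.ne' hα.ne').eventually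
    (lt_mem_nhds hb), hm.eventually (lt_mem_nhds hc), eventually_gt_atTop 0] with N hbN hmN hN
  have hNm : N < ⌈c * N⌉₊ := by
    exact_mod_cast (one_lt_div (by exact_mod_cast hN)).mp hmN
  exact hbN.trans_le (div_le_div_of_nonneg_right (tailAverage_le hs hsum hNm) (by positivity))

theorem eventually_div_lt_of_lt_one {s : ℕ → ℝ} {C α c : ℝ} (hs : Antitone s)
    (hsum : Summable s) (hC : 0 ≤ C) (hα : 0 < α)
    (htail : Tendsto (fun n : ℕ => tailSum s n / (C * (n : ℝ) ^ (-α))) atTop (𝓝 1))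
    (hc₀ : 0 < c) (hc : c < 1) :
    ∀ b > (1 - c ^ (-α)) / (α * (c - 1)),
      ∀ᶠ N : ℕ in atTop, s N / (α * C * (N : ℝ) ^ (-α - 1)) < b := by
  intro b hb
  have hm : Tendsto (fun N : ℕ => (⌈c * N⌉₊ : ℝ) / N) atTop (𝓝 c) :=
    (tendsto_nat_ceil_mul_div_atTop hc₀.le).comp tendsto_natCast_atTop_atTop
  filter_upwards [(tendsto_tailAverage_div htail hm hc₀ hc.ne hα.ne').eventually
    (gt_mem_nhds hb), hm.eventually (gt_mem_nhds hc), eventually_gt_atTop 0] with N hbN hmN hN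
  have hNm : ⌈c * N⌉₊ < N := by
    exact_mod_cast (div_lt_one (by exact_mod_cast hN)).mp hmN
  exact (div_le_div_of_nonneg_right (le_tailAverage hs hsum hNm) (by positivity)).trans_lt hbN

theorem stmt_14_general (s : ℕ → ℝ) (hmono : ∀ n, s (n + 1) ≤ s n)
    (hsum : Summable s) (C α : ℝ) (hC : 0 < C) (hα : 0 < α)
    (htail : Filter.Tendsto
      (fun n : ℕ => (∑' k : ℕ, s (n + k)) / (C * (n : ℝ) ^ (-α)))
      Filter.atTop (nhds 1)) :
    Filter.Tendsto (fun n : ℕ => s n / (α * C * (n : ℝ) ^ (-α - 1)))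
      Filter.atTop (nhds 1) := by
  have hs : Antitone s := antitone_nat_of_succ_le hmono
  have hlim := tendsto_one_sub_rpow_neg_div hα.ne'
  refine tendsto_of_eventually_bounds (hlim.mono_left (nhdsGT_le_nhdsNE 1))
    (hlim.mono_left (nhdsLT_le_nhdsNE 1)) ?_ ?_
  · filter_upwards [self_mem_nhdsWithin] with c hc
    exact eventually_lt_div_of_one_lt hs hsum hC.le hα htail hc
  · filter_upwards [self_mem_nhdsWithin, Ioo_mem_nhdsLT one_pos] with c hc hc₀
    exact eventually_div_lt_of_lt_one hs hsum hC.le hα htail hc₀.1 hc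

/-- Monotone density/Tauberian argument: if (s_n) is nonincreasing, nonnegative,
summable, and ∑_{k≥n} s_k ∼ C n^{−α}, then s_n ∼ αC n^{−α−1}. -/
theorem stmt_14 (s : ℕ → ℝ) (hnn : ∀ n, 0 ≤ s n) (hmono : ∀ n, s (n + 1) ≤ s n)
    (hsum : Summable s) (C α : ℝ) (hC : 0 < C) (hα : 0 < α)
    (htail : Filter.Tendsto
      (fun n : ℕ => (∑' k : ℕ, s (n + k)) / (C * (n : ℝ) ^ (-α)))
      Filter.atTop (nhds 1)) :
    Filter.Tendsto (fun n : ℕ => s n / (α * C * (n : ℝ) ^ (-α - 1)))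
      Filter.atTop (nhds 1) :=
  stmt_14_general s hmono hsum C α hC hα htail
end

section
/- For every real K with (√7 − 2)/3 < K < √3, the quadratic polynomial q(V) = (K² − 3)V² + 4(1 + K)² V + (K² − 3) satisfies q(0) < 0 and q(1) > 0, and hence has a real root in the open interval (0, 1). Moreover its discriminant equals 4(K² + 4K + 5)(3K² + 4K − 1) > 0, and V₊(K) = (2(K+1)² − √((K²+4K+5)(3K²+4K−1)))/(3 − K²) is a root of q lying in (0,1). -/
/-!
Writing `a = 3 - K²` and `b = 2(K + 1)²`, the quadratic is `-a V² + 2b V - a`. Its discriminant is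
`4(b² - a²) = 4(b + a)(b - a)` with `b + a = K² + 4K + 5` and `b - a = 3K² + 4K - 1`, and the two
hypotheses on `K` say exactly that `a > 0` and `b - a > 0`. The roots have product `1`, so when
`0 < a < b` the smaller one, `(b - √(b² - a²)) / a`, lies in `(0, 1)`.
-/

open Real Set

namespace ReciprocalQuadratic

variable {a b : ℝ}

theorem smaller_root_isRoot (ha : a ≠ 0) (hab : a ^ 2 ≤ b ^ 2) :
    -a * ((b - √(b ^ 2 - a ^ 2)) / a) ^ 2 + 2 * b * ((b - √(b ^ 2 - a ^ 2)) / a) - a = 0 := by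
  have hsq : √(b ^ 2 - a ^ 2) ^ 2 = b ^ 2 - a ^ 2 := sq_sqrt (sub_nonneg.mpr hab)
  field_simp
  linear_combination -hsq

theorem smaller_root_mem_Ioo (ha : 0 < a) (hab : a < b) :
    (b - √(b ^ 2 - a ^ 2)) / a ∈ Ioo 0 1 := by
  have hdisc : b ^ 2 - a ^ 2 = (b - a) * (b + a) := by ring
  have hlt : √(b ^ 2 - a ^ 2) < b := by
    rw [sqrt_lt' (by linarith)]
    nlinarith
  have hgt : b - a < √(b ^ 2 - a ^ 2) := by
    rw [lt_sqrt (by linarith), hdisc]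
    nlinarith
  exact ⟨div_pos (by linarith) ha, (div_lt_one ha).mpr (by linarith)⟩

end ReciprocalQuadratic

theorem three_mul_sq_add_four_mul_sub_one_pos {K : ℝ} (hK : (√7 - 2) / 3 < K) :
    0 < 3 * K ^ 2 + 4 * K - 1 := by
  have h7 : √7 ^ 2 = 7 := sq_sqrt (by norm_num)
  have h7n : 0 ≤ √7 := sqrt_nonneg 7
  -- `(±√7 - 2) / 3` are the roots of `3K² + 4K - 1`.
  nlinarith

/-- For (√7−2)/3 < K < √3, q(V) = (K²−3)V² + 4(1+K)²V + (K²−3) has q(0) < 0,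
q(1) > 0, hence a root in (0,1); its discriminant equals
4(K²+4K+5)(3K²+4K−1) > 0, and V₊(K) = (2(K+1)² − √(…))/(3−K²) is a root in (0,1). -/
theorem stmt_18 (K : ℝ) (h1 : (Real.sqrt 7 - 2) / 3 < K) (h2 : K < Real.sqrt 3) :
    let q : ℝ → ℝ := fun V => (K ^ 2 - 3) * V ^ 2 + 4 * (1 + K) ^ 2 * V + (K ^ 2 - 3)
    let Vp : ℝ := (2 * (K + 1) ^ 2 -
      Real.sqrt ((K ^ 2 + 4 * K + 5) * (3 * K ^ 2 + 4 * K - 1))) / (3 - K ^ 2)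
    q 0 < 0 ∧ q 1 > 0 ∧ (∃ V ∈ Set.Ioo (0 : ℝ) 1, q V = 0) ∧
    (4 * (1 + K) ^ 2) ^ 2 - 4 * (K ^ 2 - 3) ^ 2
      = 4 * (K ^ 2 + 4 * K + 5) * (3 * K ^ 2 + 4 * K - 1) ∧
    0 < 4 * (K ^ 2 + 4 * K + 5) * (3 * K ^ 2 + 4 * K - 1) ∧
    q Vp = 0 ∧ Vp ∈ Set.Ioo (0 : ℝ) 1 := by
  intro q Vp
  have hba : 0 < 3 * K ^ 2 + 4 * K - 1 := three_mul_sq_add_four_mul_sub_one_pos h1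
  have hK : 0 ≤ K := by nlinarith [sqrt_nonneg 7, sq_sqrt (show (0 : ℝ) ≤ 7 by norm_num)]
  have ha : 0 < 3 - K ^ 2 := by nlinarith [(lt_sqrt hK).mp h2]
  have hq : ∀ V, q V = -(3 - K ^ 2) * V ^ 2 + 2 * (2 * (K + 1) ^ 2) * V - (3 - K ^ 2) :=
    fun V => by simp only [q]; ring
  have hVp : Vp = (2 * (K + 1) ^ 2 - √((2 * (K + 1) ^ 2) ^ 2 - (3 - K ^ 2) ^ 2)) / (3 - K ^ 2) := by
    simp only [Vp]; ring_nf
  have hab : 3 - K ^ 2 < 2 * (K + 1) ^ 2 := by linarith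
  have hroot : q Vp = 0 := by
    rw [hq, hVp]
    exact ReciprocalQuadratic.smaller_root_isRoot ha.ne' (by nlinarith)
  have hmem : Vp ∈ Ioo 0 1 := hVp ▸ ReciprocalQuadratic.smaller_root_mem_Ioo ha hab
  refine ⟨by rw [hq]; linarith, by rw [hq]; linarith, ⟨Vp, hmem, hroot⟩, by ring,
    by positivity, hroot, hmem⟩
end
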